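/- Suppose 𝒫 = (X ∪ {z}, 𝐫 ∪ {w}) is aspherical (δ_𝒫 is injective) and F decomposes as the internal semidirect product N₀ ⋊ F₁, i.e. N₀ ∩ F₁ = {1} and N₀·F₁ = F, with F₁ acting on N₀ by conjugation. Then the subpresentation 𝒫₁ = (X, 𝐫) is aspherical (δ_{𝒫₁} is injective). -/

import Mathlib

universe u

/-- The Peiffer relators of a presentation with relators `rels`: the words
`(ᵘs)(ᵛt)(ᵘs)⁻¹(^{u s u⁻¹ v}t)⁻¹`, written on the alphabet of symbols `ᵘs = (u, s)`. -/
def peifferRels {A : Type u} (rels : Set (FreeGroup A)) :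
    Set (FreeGroup (FreeGroup A × ↥rels)) :=
  {x | ∃ (u v : FreeGroup A) (s t : ↥rels),
    x = FreeGroup.of (u, s) * FreeGroup.of (v, t) * (FreeGroup.of (u, s))⁻¹ *
      (FreeGroup.of (u * (s : FreeGroup A) * u⁻¹ * v, t))⁻¹}

/-- The free crossed module quotient `H(𝒬)/P(𝒬)` of a presentation `𝒬 = (A, rels)`. -/
abbrev CrossedQuot {A : Type u} (rels : Set (FreeGroup A)) :=
  PresentedGroup (peifferRels rels)

/-- The boundary homomorphism `δ : H(𝒬)/P(𝒬) → FG(A)` induced by `ᵘs ↦ u s u⁻¹`. -/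
def delta {A : Type u} (rels : Set (FreeGroup A)) :
    CrossedQuot rels →* FreeGroup A :=
  PresentedGroup.toGroup
    (f := fun p : FreeGroup A × ↥rels => p.1 * (p.2 : FreeGroup A) * p.1⁻¹) (by
    rintro x ⟨u, v, s, t, rfl⟩
    simp only [map_mul, map_inv, FreeGroup.lift_apply_of]
    group)

/-! The semidirect decomposition `F = N₀ ⋊ F₁` yields a retraction `ρ : F → F₁` of the inclusion
killing `w`. Both the inclusion `𝒫₁ → 𝒫` and `ρ`, which sends `ι r` back to `r` and `w` to `1`,
are maps of presentations; they induce maps of free crossed modules that commute with the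
boundaries, and the composite `𝒫₁ → 𝒫 → 𝒫₁` induces the identity. Hence `H(𝒫₁)/P(𝒫₁)` embeds
in `H(𝒫)/P(𝒫)` compatibly with `δ`, and injectivity of `δ_𝒫` passes to `δ_{𝒫₁}`. -/

namespace CrossedQuot

variable {A B : Type*} {relsA : Set (FreeGroup A)} {relsB : Set (FreeGroup B)}

lemma mk_peiffer_eq_one {r : FreeGroup (FreeGroup A × relsA)} (hr : r ∈ peifferRels relsA) :
    PresentedGroup.mk (peifferRels relsA) r = 1 :=
  (QuotientGroup.eq_one_iff _).2 (Subgroup.subset_normalClosure hr)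

/-- The map of free crossed modules induced by a homomorphism `φ` of free groups that sends each
relator `s` either to a relator `t` (`σ s = some t`) or to `1` (`σ s = none`). -/
def map (φ : FreeGroup A →* FreeGroup B) (σ : relsA → Option relsB)
    (hσ : ∀ s : relsA, φ s = (σ s).elim 1 Subtype.val) : CrossedQuot relsA →* CrossedQuot relsB :=
  PresentedGroup.toGroup
    (f := fun p => (σ p.2).elim 1 fun t => PresentedGroup.of (φ p.1, t)) (by
    rintro r ⟨u, v, s, t, rfl⟩
    simp only [map_mul, map_inv, FreeGroup.lift_apply_of]
    rcases ht : σ t with _ | t'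
    · simp
    rcases hs : σ s with _ | s'
    · have hs1 : φ s = 1 := by simp [hσ, hs]
      simp [hs1]
    · have hs1 : φ s = s' := by simp [hσ, hs]
      simp only [Option.elim_some, hs1]
      exact mk_peiffer_eq_one ⟨φ u, φ v, s', t', rfl⟩)

section

variable (φ : FreeGroup A →* FreeGroup B) (σ : relsA → Option relsB)
    (hσ : ∀ s : relsA, φ s = (σ s).elim 1 Subtype.val)

@[simp]
lemma map_of (u : FreeGroup A) (s : relsA) :
    map φ σ hσ (PresentedGroup.of (u, s)) = (σ s).elim 1 fun t => PresentedGroup.of (φ u, t) :=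
  PresentedGroup.toGroup.of _

lemma delta_comp_map : (delta relsB).comp (map φ σ hσ) = φ.comp (delta relsA) := by
  refine PresentedGroup.ext fun ⟨u, s⟩ => ?_
  have hs := hσ s
  simp only [MonoidHom.comp_apply, map_of, delta, PresentedGroup.toGroup.of, map_mul, map_inv]
  rcases h : σ s with _ | t <;> simp_all

lemma map_comp_map_eq_id (φ' : FreeGroup B →* FreeGroup A) (σ' : relsB → Option relsA)
    (hσ' : ∀ t : relsB, φ' t = (σ' t).elim 1 Subtype.val) (hφ : ∀ u, φ' (φ u) = u)
    (hσσ' : ∀ s, (σ s).bind σ' = some s) :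
    (map φ' σ' hσ').comp (map φ σ hσ) = MonoidHom.id _ := by
  refine PresentedGroup.ext fun ⟨u, s⟩ => ?_
  have hs := hσσ' s
  rcases h : σ s with _ | t
  · simp [h] at hs
  · simp_all

end

theorem injective_delta_of_retract (φ : FreeGroup A →* FreeGroup B) (σ : relsA → Option relsB)
    (hσ : ∀ s : relsA, φ s = (σ s).elim 1 Subtype.val)
    (φ' : FreeGroup B →* FreeGroup A) (σ' : relsB → Option relsA)
    (hσ' : ∀ t : relsB, φ' t = (σ' t).elim 1 Subtype.val) (hφ : ∀ u, φ' (φ u) = u)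
    (hσσ' : ∀ s, (σ s).bind σ' = some s) (hB : Function.Injective (delta relsB)) :
    Function.Injective (delta relsA) := by
  have hmap : Function.LeftInverse (map φ' σ' hσ') (map φ σ hσ) :=
    DFunLike.congr_fun (map_comp_map_eq_id φ σ hσ φ' σ' hσ' hφ hσσ')
  have hcomp : Function.Injective (φ ∘ delta relsA) := by
    rw [← MonoidHom.coe_comp, ← delta_comp_map φ σ hσ, MonoidHom.coe_comp]
    exact hB.comp hmap.injective
  exact hcomp.of_comp

end CrossedQuot

lemma MonoidHom.exists_retraction_of_normal_complement {G H : Type*} [Group G] [Group H]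
    (ι : H →* G) (hι : Function.Injective ι) (N : Subgroup G) [N.Normal]
    (hmeet : N ⊓ ι.range = ⊥) (hjoin : ∀ g, ∃ n ∈ N, ∃ h ∈ ι.range, g = n * h) :
    ∃ ρ : G →* H, (∀ h, ρ (ι h) = h) ∧ ∀ n ∈ N, ρ n = 1 := by
  have hbij : Function.Bijective ((QuotientGroup.mk' N).comp ι) := by
    refine ⟨(injective_iff_map_eq_one _).2 fun h hh => hι ?_, fun q => ?_⟩
    · have : ι h ∈ N ⊓ ι.range := ⟨(QuotientGroup.eq_one_iff _).1 hh, h, rfl⟩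
      rw [hmeet, Subgroup.mem_bot] at this
      rw [this, map_one]
    · obtain ⟨g, rfl⟩ := QuotientGroup.mk'_surjective N q
      obtain ⟨n, hn, _, ⟨h, rfl⟩, rfl⟩ := hjoin g
      refine ⟨h, ?_⟩
      simp [hn]
  let e := MulEquiv.ofBijective _ hbij
  refine ⟨e.symm.toMonoidHom.comp (QuotientGroup.mk' N), fun h => e.symm_apply_apply h,
    fun n hn => ?_⟩
  simp [(QuotientGroup.eq_one_iff n).2 hn]

/-- If `𝒫 = (X ∪ {z}, 𝐫 ∪ {w})` is aspherical (`δ_𝒫` is injective) and the free group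
`F = FG(X ∪ {z})` decomposes as the internal semidirect product `N₀ ⋊ F₁`, where `N₀` is
the normal closure of `w` and `F₁` is the subgroup generated by `X`, then the
subpresentation `𝒫₁ = (X, 𝐫)` is aspherical (`δ_{𝒫₁}` is injective). -/
theorem subpresentation_aspherical_of_semidirect {X : Type u}
    (rels : Set (FreeGroup X)) (w : FreeGroup (Option X))
    (ι : FreeGroup X →* FreeGroup (Option X))
    (hι : ∀ x : X, ι (FreeGroup.of x) = FreeGroup.of (some x))
    (hasp : Function.Injective (delta (ι '' rels ∪ {w})))
    (hmeet : Subgroup.normalClosure ({w} : Set (FreeGroup (Option X))) ⊓ ι.range = ⊥)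
    (hjoin : ∀ f : FreeGroup (Option X),
      ∃ n ∈ Subgroup.normalClosure ({w} : Set (FreeGroup (Option X))),
        ∃ g ∈ ι.range, f = n * g) :
    Function.Injective (delta rels) := by
  classical
  have hinj : Function.Injective ι := by
    rw [show ι = FreeGroup.map some from FreeGroup.ext_hom _ _ fun x => by simp [hι]]
    exact FreeGroup.map_injective (Option.some_injective X)
  obtain ⟨ρ, hρι, hρN⟩ := ι.exists_retraction_of_normal_complement hinj _ hmeet hjoin
  let e := Equiv.Set.image ι rels hinj
  let σ' : ↥(ι '' rels ∪ {w}) → Option rels := fun t =>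
    if h : t.1 ∈ ι '' rels then some (e.symm ⟨t, h⟩) else none
  have hσ' : ∀ t : ↥(ι '' rels ∪ {w}), ρ t = (σ' t).elim 1 Subtype.val := by
    intro t
    by_cases h : t.1 ∈ ι '' rels
    · have hιe : ι (e.symm ⟨t, h⟩) = t := congrArg Subtype.val (e.apply_symm_apply ⟨t, h⟩)
      rw [show σ' t = _ from dif_pos h, Option.elim_some, ← hρι (e.symm ⟨t, h⟩), hιe]
    · rw [show σ' t = none from dif_neg h, Option.elim_none, t.2.resolve_left h]
      exact hρN w (Subgroup.subset_normalClosure rfl)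
  refine CrossedQuot.injective_delta_of_retract ι
    (fun s => some ⟨ι s, .inl (Set.mem_image_of_mem ι s.2)⟩) (fun _ => rfl) ρ σ' hσ' hρι
    (fun s => ?_) hasp
  simp only [Option.bind_some, σ', dif_pos (Set.mem_image_of_mem ι s.2), e,
    Equiv.Set.image_symm_apply]
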